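/- Let β be a probability measure on the closed unit ball B₁(0) ⊂ ℝ^d of norm ‖·‖, let g ∈ ℝ^d, and let φ be convex lsc with φ(1)=0, φ(x)=∞ for x<0, satisfying either lim_{t→∞}φ(t)/t<∞ or (lim_{t→∞}φ(t)/t=∞ and dom φ = ℝ_+), with supp β = B₁(0). Then as C → ∞, inf over μ ∈ ℝ of { μ + (1/C)·E_{b∼β}[ φ^*( C·(gᵀb − μ) ) ] } converges to sup_{b ∈ B₁(0)} gᵀb = ‖g‖_*. -/

import Mathlib

open MeasureTheory Filter Topology
open scoped Classical

/-! The upper bound comes from a supporting line `φ s ≥ k (s - 1)` of `φ` at `1`: it makes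
`φ^* ≤ k` on `(-∞, k]`, so shifting `μ = ‖g‖ - k / C` gives objective value at most `‖g‖`.
For the lower bound, fix `a < ‖g‖`; by the support assumption `A = {g b > a}` has mass `p > 0`.
Testing the conjugate at `s = 1 / p` on `A` and at `s = 0` off `A` gives, uniformly in `μ`,
objective `≥ a - (p φ(1/p) + (1 - p) φ 0) / C`, and the `μ`-terms cancel because `p s = 1`. -/

lemma ConvexOn.exists_affine_le_of_mem_interior {S : Set ℝ} {f : ℝ → ℝ} {x : ℝ}
    (hf : ConvexOn ℝ S f) (hx : x ∈ interior S) :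
    ∃ k : ℝ, ∀ y ∈ S, f x + k * (y - x) ≤ f y := by
  refine ⟨derivWithin f (Set.Ioi x) x, fun y hy => ?_⟩
  rcases lt_trichotomy y x with hyx | rfl | hxy
  · have h := (hf.slope_le_leftDeriv_of_mem_interior hy hx hyx).trans
      (hf.leftDeriv_le_rightDeriv_of_mem_interior hx)
    rw [slope_def_field, div_le_iff₀ (sub_pos.2 hyx)] at h
    linarith
  · simp
  · have h := hf.rightDeriv_le_slope_of_mem_interior hx hy hxy
    rw [slope_def_field, le_div_iff₀ (sub_pos.2 hxy)] at h
    linarith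

noncomputable def nonnegConj (φ : ℝ → ℝ) (t : ℝ) : EReal :=
  ⨆ s : {s : ℝ // 0 ≤ s}, ((t * s.1 - φ s.1 : ℝ) : EReal)

section nonnegConj

variable {φ : ℝ → ℝ} {s t : ℝ}

lemma coe_le_nonnegConj (hs : 0 ≤ s) : ((t * s - φ s : ℝ) : EReal) ≤ nonnegConj φ t :=
  le_iSup (fun u : {u : ℝ // 0 ≤ u} => ((t * u.1 - φ u.1 : ℝ) : EReal)) ⟨s, hs⟩

lemma nonnegConj_ne_bot : nonnegConj φ t ≠ ⊥ :=
  ne_bot_of_le_ne_bot (EReal.coe_ne_bot _) (coe_le_nonnegConj le_rfl)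

lemma le_toReal_nonnegConj (hs : 0 ≤ s) (h : nonnegConj φ t ≠ ⊤) :
    t * s - φ s ≤ (nonnegConj φ t).toReal := by
  have := EReal.toReal_le_toReal (coe_le_nonnegConj hs) (EReal.coe_ne_bot _) h
  rwa [EReal.toReal_coe] at this

lemma neg_le_toReal_nonnegConj (h : nonnegConj φ t ≠ ⊤) : -φ 0 ≤ (nonnegConj φ t).toReal := by
  simpa using le_toReal_nonnegConj le_rfl h

lemma monotone_nonnegConj (φ : ℝ → ℝ) : Monotone (nonnegConj φ) := fun _ _ htt' =>
  iSup_mono fun s => EReal.coe_le_coe_iff.2 (by nlinarith [s.2])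

lemma nonnegConj_le_of_le {k : ℝ} (hk : ∀ s, 0 ≤ s → k * (s - 1) ≤ φ s) (ht : t ≤ k) :
    nonnegConj φ t ≤ k :=
  iSup_le fun s => EReal.coe_le_coe_iff.2 (by nlinarith [hk s.1 s.2, s.2])

end nonnegConj

noncomputable def oceObjective {Ω : Type*} [MeasurableSpace Ω] (β : Measure Ω) (X : Ω → ℝ)
    (φ : ℝ → ℝ) (C μ : ℝ) : EReal :=
  if (∀ᵐ ω ∂β, nonnegConj φ (C * (X ω - μ)) ≠ ⊤) ∧
      Integrable (fun ω => (nonnegConj φ (C * (X ω - μ))).toReal) β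
    then ((μ + (1 / C) * ∫ ω, (nonnegConj φ (C * (X ω - μ))).toReal ∂β : ℝ) : EReal) else ⊤

section oceObjective

variable {Ω : Type*} [MeasurableSpace Ω] (β : Measure Ω) [IsProbabilityMeasure β]
  {X : Ω → ℝ} {φ : ℝ → ℝ}

lemma oceObjective_le (hX : Measurable X) {M k C : ℝ} (hXM : ∀ᵐ ω ∂β, X ω ≤ M)
    (hk : ∀ s, 0 ≤ s → k * (s - 1) ≤ φ s) (hC : 0 < C) :
    oceObjective β X φ C (M - k / C) ≤ M := by
  have hle : ∀ᵐ ω ∂β, nonnegConj φ (C * (X ω - (M - k / C))) ≤ k := by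
    filter_upwards [hXM] with ω hω
    refine nonnegConj_le_of_le hk ?_
    have : C * (X ω - (M - k / C)) = C * (X ω - M) + k := by field_simp; ring
    nlinarith
  have hne : ∀ᵐ ω ∂β, nonnegConj φ (C * (X ω - (M - k / C))) ≠ ⊤ :=
    hle.mono fun _ h => ne_top_of_le_ne_top (EReal.coe_ne_top k) h
  set f := fun ω => (nonnegConj φ (C * (X ω - (M - k / C)))).toReal
  have hf_mem : ∀ᵐ ω ∂β, f ω ∈ Set.Icc (-φ 0) k := by
    filter_upwards [hle, hne] with ω hle hne
    exact ⟨neg_le_toReal_nonnegConj hne,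
      by simpa using EReal.toReal_le_toReal hle nonnegConj_ne_bot (EReal.coe_ne_top k)⟩
  have hf_meas : Measurable f := measurable_ereal_toReal.comp
    ((monotone_nonnegConj φ).measurable.comp ((hX.sub measurable_const).const_mul C))
  have hf_int : Integrable f β := .of_mem_Icc _ _ hf_meas.aemeasurable hf_mem
  have hf_le : ∫ ω, f ω ∂β ≤ k := by
    simpa using integral_mono_ae hf_int (integrable_const k) (hf_mem.mono fun _ h => h.2)
  rw [oceObjective, if_pos ⟨hne, hf_int⟩, EReal.coe_le_coe_iff]
  calc M - k / C + 1 / C * ∫ ω, f ω ∂β ≤ M - k / C + 1 / C * k := by gcongr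
    _ = M := by ring

lemma exists_sub_div_le_oceObjective (hX : Measurable X) {a : ℝ}
    (hp : 0 < β {ω | a < X ω}) :
    ∃ D : ℝ, ∀ C, 0 < C → ∀ μ, ((a - D / C : ℝ) : EReal) ≤ oceObjective β X φ C μ := by
  set A := {ω | a < X ω}
  have hA : MeasurableSet A := measurableSet_lt measurable_const hX
  set p := β.real A
  have hp0 : 0 < p := ENNReal.toReal_pos hp.ne' (measure_ne_top β A)
  refine ⟨p * φ p⁻¹ + (1 - p) * φ 0, fun C hC μ => ?_⟩
  rw [oceObjective]
  split_ifs with h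
  swap
  · exact le_top
  obtain ⟨hne, hint⟩ := h
  set f := fun ω => (nonnegConj φ (C * (X ω - μ))).toReal
  set h := A.piecewise (fun _ => C * (a - μ) * p⁻¹ - φ p⁻¹) (fun _ => -φ 0) with h_def
  have hhf : h ≤ᵐ[β] f := by
    filter_upwards [hne] with ω hω
    by_cases hωA : ω ∈ A
    · rw [h_def, Set.piecewise_eq_of_mem _ _ _ hωA]
      calc C * (a - μ) * p⁻¹ - φ p⁻¹ ≤ C * (X ω - μ) * p⁻¹ - φ p⁻¹ := by
            have : a ≤ X ω := le_of_lt hωA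
            gcongr
        _ ≤ f ω := le_toReal_nonnegConj (by positivity) hω
    · rw [h_def, Set.piecewise_eq_of_notMem _ _ _ hωA]
      exact neg_le_toReal_nonnegConj hω
  have hA_int : IntegrableOn (fun _ => C * (a - μ) * p⁻¹ - φ p⁻¹) A β :=
    integrableOn_const (measure_ne_top β A)
  have hAc_int : IntegrableOn (fun _ : Ω => -φ 0) Aᶜ β := integrableOn_const (measure_ne_top β Aᶜ)
  have hh : ∫ ω, h ω ∂β = C * (a - μ) - (p * φ p⁻¹ + (1 - p) * φ 0) := by
    rw [integral_piecewise hA hA_int hAc_int, setIntegral_const, setIntegral_const,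
      probReal_compl_eq_one_sub hA, smul_eq_mul, smul_eq_mul]
    field_simp
    ring
  have hhf_int : ∫ ω, h ω ∂β ≤ ∫ ω, f ω ∂β :=
    integral_mono_ae (.piecewise hA hA_int hAc_int) hint hhf
  rw [EReal.coe_le_coe_iff]
  calc a - (p * φ p⁻¹ + (1 - p) * φ 0) / C
      = μ + 1 / C * (C * (a - μ) - (p * φ p⁻¹ + (1 - p) * φ 0)) := by field_simp; ring
    _ ≤ μ + 1 / C * ∫ ω, f ω ∂β := by rw [← hh]; gcongr

lemma eventually_le_iInf_oceObjective (hX : Measurable X) {a a' : ℝ} (haa' : a < a')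
    (hp : 0 < β {ω | a' < X ω}) :
    ∀ᶠ C in atTop, (a : EReal) ≤ ⨅ μ, oceObjective β X φ C μ := by
  obtain ⟨D, hD⟩ := exists_sub_div_le_oceObjective (φ := φ) β hX hp
  have hlim : Tendsto (fun C : ℝ => a' - D / C) atTop (𝓝 a') := by
    have : Tendsto (fun C : ℝ => D / C) atTop (𝓝 0) := tendsto_const_nhds.div_atTop tendsto_id
    simpa using this.const_sub a'
  filter_upwards [hlim.eventually_const_lt haa', eventually_gt_atTop 0] with C hlt hC
  exact le_iInf fun μ => (EReal.coe_le_coe_iff.2 hlt.le).trans (hD C hC μ)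

end oceObjective

lemma exists_apply_gt_of_lt_opNorm {E : Type*} [NormedAddCommGroup E] [NormedSpace ℝ E]
    (g : E →L[ℝ] ℝ) {a : ℝ} (ha : a < ‖g‖) : ∃ b : E, ‖b‖ ≤ 1 ∧ a < g b := by
  obtain ⟨b, hb, hab⟩ := g.exists_lt_apply_of_lt_opNorm ha
  rcases le_or_gt 0 (g b) with hgb | hgb
  · exact ⟨b, hb.le, by rwa [Real.norm_of_nonneg hgb] at hab⟩
  · exact ⟨-b, by simpa using hb.le, by rwa [Real.norm_of_nonpos hgb.le, ← map_neg] at hab⟩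

lemma measure_lt_apply_pos_of_lt_opNorm {E : Type*} [NormedAddCommGroup E] [NormedSpace ℝ E]
    [MeasurableSpace E] {β : Measure E}
    (hsupp : ∀ b : E, ‖b‖ ≤ 1 → ∀ ε : ℝ, 0 < ε → 0 < β {x | ‖x - b‖ < ε})
    (g : E →L[ℝ] ℝ) {a : ℝ} (ha : a < ‖g‖) : 0 < β {x | a < g x} := by
  obtain ⟨b, hb, hab⟩ := exists_apply_gt_of_lt_opNorm g ha
  obtain ⟨ε, hε, hball⟩ := Metric.isOpen_iff.1 (isOpen_lt continuous_const g.continuous) b hab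
  refine (hsupp b hb ε hε).trans_le (measure_mono fun x hx => hball ?_)
  rwa [Metric.mem_ball, dist_eq_norm]

theorem stmt14_general {E : Type*} [NormedAddCommGroup E] [NormedSpace ℝ E] [MeasurableSpace E]
    [BorelSpace E]
    (β : Measure E) [IsProbabilityMeasure β]
    (hae : ∀ᵐ b ∂β, ‖b‖ ≤ 1)
    (hsupp : ∀ b : E, ‖b‖ ≤ 1 → ∀ ε : ℝ, 0 < ε → 0 < β {x | ‖x - b‖ < ε})
    (g : E →L[ℝ] ℝ)
    (φ : ℝ → ℝ) (hconv : ConvexOn ℝ (Set.Ici 0) φ)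
    (hφ1 : φ 1 = 0)
    (conjE : ℝ → EReal)
    (hconjE : ∀ t : ℝ, conjE t = ⨆ s : {s : ℝ // 0 ≤ s}, ((t * s.1 - φ s.1 : ℝ) : EReal))
    (Obj : ℝ → ℝ → EReal)
    (hObj : ∀ C μ : ℝ, Obj C μ =
      if (∀ᵐ b ∂β, conjE (C * (g b - μ)) ≠ ⊤) ∧
          Integrable (fun b => (conjE (C * (g b - μ))).toReal) β
        then ((μ + (1 / C) * ∫ b, (conjE (C * (g b - μ))).toReal ∂β : ℝ) : EReal) else ⊤) :
    Tendsto (fun C : ℝ => ⨅ μ : ℝ, Obj C μ) atTop (nhds ((‖g‖ : ℝ) : EReal)) := by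
  obtain rfl : conjE = nonnegConj φ := funext hconjE
  obtain rfl : Obj = oceObjective β g φ := funext₂ hObj
  obtain ⟨k, hk⟩ := hconv.exists_affine_le_of_mem_interior (x := 1) (by simp)
  have hφ_ge : ∀ s, 0 ≤ s → k * (s - 1) ≤ φ s := fun s hs => by simpa [hφ1] using hk s hs
  have hgb : ∀ᵐ b ∂β, g b ≤ ‖g‖ := hae.mono fun b hb =>
    (le_abs_self (g b)).trans (by simpa using g.le_opNorm_of_le hb)
  refine tendsto_order.2 ⟨fun y hy => ?_, fun y hy => ?_⟩
  · obtain ⟨a, hya, ha⟩ := EReal.exists_between_coe_real hy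
    obtain ⟨a', haa', ha'⟩ := exists_between (EReal.coe_lt_coe_iff.1 ha)
    filter_upwards [eventually_le_iInf_oceObjective β g.continuous.measurable haa'
      (measure_lt_apply_pos_of_lt_opNorm hsupp g ha')] with C hC
    exact hya.trans_le hC
  · filter_upwards [eventually_gt_atTop 0] with C hC
    exact (iInf_le _ _).trans_lt
      ((oceObjective_le β g.continuous.measurable hgb hφ_ge hC).trans_lt hy)

/-- OCE regularizer converging to the dual-norm (variation) regularizer.
`β` is a probability measure whose support is the closed unit ball (a.e. `‖b‖ ≤ 1`, and
every ball around a point of the unit ball has positive measure), `g` a linear functional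
(so `gᵀb = g b` and `‖g‖` is the dual norm `sup_{‖b‖≤1} g b`), and `φ` a divergence
function (convex lsc, `φ(1)=0`, `+∞` on negatives via the conjugate sup over `s ≥ 0`)
satisfying the growth condition.  Then as `C → ∞`,
`inf_μ { μ + (1/C)·E_β[φ^*(C(g b − μ))] } → ‖g‖`, where the objective is extended-real
(`+∞` unless the conjugate term is a.e. finite and integrable). -/
theorem stmt14 {E : Type*} [NormedAddCommGroup E] [NormedSpace ℝ E] [MeasurableSpace E]
    [BorelSpace E]
    (β : Measure E) [IsProbabilityMeasure β]
    (hae : ∀ᵐ b ∂β, ‖b‖ ≤ 1)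
    (hsupp : ∀ b : E, ‖b‖ ≤ 1 → ∀ ε : ℝ, 0 < ε → 0 < β {x | ‖x - b‖ < ε})
    (g : E →L[ℝ] ℝ)
    (φ : ℝ → ℝ) (hconv : ConvexOn ℝ (Set.Ici 0) φ)
    (hlsc : LowerSemicontinuousOn φ (Set.Ici 0)) (hφ1 : φ 1 = 0)
    (hgrowth : (∃ C₀ : ℝ, Tendsto (fun t => φ t / t) atTop (nhds C₀)) ∨
      Tendsto (fun t => φ t / t) atTop atTop)
    (conjE : ℝ → EReal)
    (hconjE : ∀ t : ℝ, conjE t = ⨆ s : {s : ℝ // 0 ≤ s}, ((t * s.1 - φ s.1 : ℝ) : EReal))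
    (Obj : ℝ → ℝ → EReal)
    (hObj : ∀ C μ : ℝ, Obj C μ =
      if (∀ᵐ b ∂β, conjE (C * (g b - μ)) ≠ ⊤) ∧
          Integrable (fun b => (conjE (C * (g b - μ))).toReal) β
        then ((μ + (1 / C) * ∫ b, (conjE (C * (g b - μ))).toReal ∂β : ℝ) : EReal) else ⊤) :
    Tendsto (fun C : ℝ => ⨅ μ : ℝ, Obj C μ) atTop (nhds ((‖g‖ : ℝ) : EReal)) :=
  stmt14_general β hae hsupp g φ hconv hφ1 conjE hconjE Obj hObj
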